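/- arXiv:2301.00586 — 3 statements merged into one kernel-verified Lean document; each statement's English description precedes it below -/
import Mathlib

section
/- Let λ ∈ ℂ. For every t ∈ ℝ: 𝔭_λ ∈ D(T) + ℂ·(𝔮₀ + t·𝔭₀) if and only if B(λ) + t·D(λ) = 0, and 𝔮_λ ∈ D(T) + ℂ·(𝔮₀ + t·𝔭₀) if and only if A(λ) + t·C(λ) = 0. Moreover 𝔭_λ ∈ D(T) + ℂ·𝔭₀ if and only if D(λ) = 0, and 𝔮_λ ∈ D(T) + ℂ·𝔭₀ if and only if C(λ) = 0. -/
open Filter Topology MeasureTheory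

noncomputable section

/-- Action of the Jacobi matrix `J` on a complex sequence:
`(Jc)ₙ = aₙ₋₁cₙ₋₁ + bₙcₙ + aₙcₙ₊₁` with `a₋₁ := 0`. -/
def jacobiMul (a b : ℕ → ℝ) (c : ℕ → ℂ) : ℕ → ℂ
  | 0 => (b 0 : ℂ) * c 0 + (a 0 : ℂ) * c 1
  | n + 1 => (a n : ℂ) * c n + (b (n + 1) : ℂ) * c (n + 1) + (a (n + 1) : ℂ) * c (n + 2)

/-- `jacobiGraph a b f g` means: `f` belongs to the domain `D(T)` of the closure `T` of the
Jacobi matrix acting on the finitely supported sequences, and `T f = g`; i.e. there are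
finitely supported sequences `u k → f` in `ℓ²` such that `J (u k) → g` in `ℓ²`. -/
def jacobiGraph (a b : ℕ → ℝ) (f g : ℕ → ℂ) : Prop :=
  ∃ u : ℕ → ℕ → ℂ,
    (∀ k, (Function.support (u k)).Finite) ∧
    (∀ k, Summable fun n => ‖u k n - f n‖ ^ 2) ∧
    Tendsto (fun k => ∑' n, ‖u k n - f n‖ ^ 2) atTop (𝓝 0) ∧
    (∀ k, Summable fun n => ‖jacobiMul a b (u k) n - g n‖ ^ 2) ∧
    Tendsto (fun k => ∑' n, ‖jacobiMul a b (u k) n - g n‖ ^ 2) atTop (𝓝 0)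

/-- Membership in the domain `D(T)` of the Jacobi operator. -/
def inDomT (a b : ℕ → ℝ) (f : ℕ → ℂ) : Prop := ∃ g, jacobiGraph a b f g

/-- The `ℓ²` norm of a complex sequence. -/
def l2norm (f : ℕ → ℂ) : ℝ := Real.sqrt (∑' n, ‖f n‖ ^ 2)

/-- The data of an indeterminate Hamburger moment problem: Jacobi parameters `a`, `b`,
the orthonormal polynomials `p` and second-kind polynomials `q` (as entire functions),
determined by the three-term recurrence, together with the indeterminacy condition
`∑ₙ (|pₙ(z)|² + |qₙ(z)|²) < ∞` for all `z`. -/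
structure JacobiSetup where
  a : ℕ → ℝ
  b : ℕ → ℝ
  ha : ∀ n, 0 < a n
  p : ℕ → ℂ → ℂ
  q : ℕ → ℂ → ℂ
  hp0 : ∀ z, p 0 z = 1
  hp1 : ∀ z, p 1 z = (z - (b 0 : ℂ)) / (a 0 : ℂ)
  hq0 : ∀ z, q 0 z = 0
  hq1 : ∀ z, q 1 z = 1 / (a 0 : ℂ)
  hrecp : ∀ n z, z * p (n + 1) z =
    (a (n + 1) : ℂ) * p (n + 2) z + (b (n + 1) : ℂ) * p (n + 1) z + (a n : ℂ) * p n z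
  hrecq : ∀ n z, z * q (n + 1) z =
    (a (n + 1) : ℂ) * q (n + 2) z + (b (n + 1) : ℂ) * q (n + 1) z + (a n : ℂ) * q n z
  indet : ∀ z : ℂ, Summable fun n => ‖p n z‖ ^ 2 + ‖q n z‖ ^ 2

/-- The Nevanlinna function `A(u,v)`. -/
def nevA (S : JacobiSetup) (u v : ℂ) : ℂ := (u - v) * ∑' k, S.q k u * S.q k v
/-- The Nevanlinna function `B(u,v)`. -/
def nevB (S : JacobiSetup) (u v : ℂ) : ℂ := -1 + (u - v) * ∑' k, S.p k u * S.q k v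
/-- The Nevanlinna function `C(u,v)`. -/
def nevC (S : JacobiSetup) (u v : ℂ) : ℂ := 1 + (u - v) * ∑' k, S.q k u * S.p k v
/-- The Nevanlinna function `D(u,v)`. -/
def nevD (S : JacobiSetup) (u v : ℂ) : ℂ := (u - v) * ∑' k, S.p k u * S.p k v


/-!
Let `W(f, h) = ∑ₙ ((Jf)ₙ hₙ - fₙ (Jh)ₙ)` on the maximal domain `{f ∈ ℓ² | Jf ∈ ℓ²}`; by Green's
formula it is the limit of the Wronskians `aₙ (fₙ₊₁ hₙ - fₙ hₙ₊₁)`. Since `D(T)` is the closure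
of the graph of `J` on finitely supported sequences, i.e. its double orthogonal complement in
`ℓ² × ℓ²`, the domain `D(T)` consists of the `f` in the maximal domain with `W(f, ·) = 0`.

The Wronskian of `𝔭₀` and `𝔮₀` is constantly `-1`, so the Plücker identity for Wronskians gives
`W(f, h) = W(f, 𝔮₀) W(h, 𝔭₀) - W(f, 𝔭₀) W(h, 𝔮₀)`. Hence `f ∈ D(T)` iff `W(f, 𝔭₀) = W(f, 𝔮₀) = 0`,
and for `v` in the maximal domain but not in `D(T)`, `f ∈ D(T) + ℂ v` iff `W(f, v) = 0`. Finally
`J𝔭_z = z 𝔭_z` and `J𝔮_z = z 𝔮_z + δ₀` make `W` evaluate to the Nevanlinna functions, e.g.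
`W(𝔭_u, 𝔮_v) = B(u, v)`.
-/

open scoped lp ComplexConjugate

section SequenceSpaces

variable {ι : Type*}

lemma memℓp_two_iff_summable_sq {E : ι → Type*} [∀ i, NormedAddCommGroup (E i)]
    {f : ∀ i, E i} : Memℓp f 2 ↔ Summable fun i => ‖f i‖ ^ 2 := by
  rw [memℓp_gen_iff (by norm_num)]
  norm_num

lemma Memℓp.of_support_finite {E : Type*} [NormedAddCommGroup E] {f : ι → E}
    (hf : (Function.support f).Finite) (p : ENNReal) : Memℓp f p :=
  (memℓp_zero hf).of_exponent_ge zero_le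

lemma Memℓp.of_summable_norm_sub_sq {E : ι → Type*} [∀ i, NormedAddCommGroup (E i)]
    {f g : ∀ i, E i} (hf : Memℓp f 2) (hfg : Summable fun i => ‖f i - g i‖ ^ 2) :
    Memℓp g 2 := by
  convert hf.sub (memℓp_two_iff_summable_sq.2 hfg) using 1
  funext i
  simp

lemma Memℓp.summable_mul {f g : ι → ℂ} (hf : Memℓp f 2) (hg : Memℓp g 2) :
    Summable fun i => f i * g i := by
  refine .of_norm ?_
  simpa only [norm_mul] using
    lp.summable_mul (p := 2) (q := 2) (by norm_num [Real.HolderConjugate.two_two])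
      ⟨f, hf⟩ ⟨g, hg⟩

lemma lp.norm_sq_eq_tsum {E : ι → Type*} [∀ i, NormedAddCommGroup (E i)] (f : lp E 2) :
    ‖f‖ ^ 2 = ∑' i, ‖f i‖ ^ 2 := by
  simpa using lp.norm_rpow_eq_tsum (p := 2) (by norm_num) f

lemma lp.tendsto_iff_tsum_sq {α : Type*} {E : ι → Type*} [∀ i, NormedAddCommGroup (E i)]
    {l : Filter α} {z : α → lp E 2} {x : lp E 2} :
    Tendsto z l (𝓝 x) ↔ Tendsto (fun k => ∑' i, ‖z k i - x i‖ ^ 2) l (𝓝 0) := by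
  have hsq (k : α) : ∑' i, ‖z k i - x i‖ ^ 2 = ‖z k - x‖ ^ 2 := by
    rw [lp.norm_sq_eq_tsum]; rfl
  simp only [tendsto_iff_norm_sub_tendsto_zero (f := z), hsq]
  exact ⟨fun h => by simpa using h.pow 2, fun h => by simpa using h.sqrt⟩

end SequenceSpaces

section JacobiMatrix

variable {a b : ℕ → ℝ}

lemma jacobiMul_add (f g : ℕ → ℂ) :
    jacobiMul a b (f + g) = jacobiMul a b f + jacobiMul a b g := by
  funext n; cases n <;> simp only [jacobiMul, Pi.add_apply] <;> ring

lemma jacobiMul_smul (c : ℂ) (f : ℕ → ℂ) :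
    jacobiMul a b (c • f) = c • jacobiMul a b f := by
  funext n; cases n <;> simp only [jacobiMul, Pi.smul_apply, smul_eq_mul] <;> ring

lemma jacobiMul_star (f : ℕ → ℂ) : jacobiMul a b (star f) = star (jacobiMul a b f) := by
  funext n; cases n <;> simp [jacobiMul]

lemma exists_eq_zero_of_support_finite {u : ℕ → ℂ} (hu : (Function.support u).Finite) :
    ∃ N, ∀ m, N < m → u m = 0 := by
  obtain ⟨N, hN⟩ := hu.bddAbove
  exact ⟨N, fun m hm => by_contra fun h => absurd (hN h) (not_le.2 hm)⟩

lemma jacobiMul_eq_zero_of_lt {u : ℕ → ℂ} {N : ℕ} (hu : ∀ m, N < m → u m = 0) {n : ℕ}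
    (hn : N + 1 < n) : jacobiMul a b u n = 0 := by
  obtain ⟨k, rfl⟩ : ∃ k, n = k + 1 := ⟨n - 1, by omega⟩
  simp [jacobiMul, hu k (by omega), hu (k + 1) (by omega), hu (k + 2) (by omega)]

lemma jacobiMul_support_finite {u : ℕ → ℂ} (hu : (Function.support u).Finite) :
    (Function.support (jacobiMul a b u)).Finite := by
  obtain ⟨N, hN⟩ := exists_eq_zero_of_support_finite hu
  exact (Set.finite_Iic (N + 1)).subset fun n hn =>
    not_lt.1 fun hlt => hn (jacobiMul_eq_zero_of_lt hN hlt)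

def wronskian (a : ℕ → ℝ) (f h : ℕ → ℂ) (n : ℕ) : ℂ :=
  a n * (f (n + 1) * h n - f n * h (n + 1))

lemma sum_range_jacobiMul_mul_sub (f h : ℕ → ℂ) (N : ℕ) :
    ∑ n ∈ Finset.range (N + 1), (jacobiMul a b f n * h n - f n * jacobiMul a b h n) =
      wronskian a f h N := by
  induction N with
  | zero =>
    simp only [zero_add, Finset.range_one, Finset.sum_singleton, jacobiMul, wronskian]
    ring
  | succ N ih =>
    rw [Finset.sum_range_succ, ih]
    simp only [jacobiMul, wronskian]
    ring

lemma wronskian_mul_wronskian (f h p q : ℕ → ℂ) (n : ℕ) :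
    wronskian a f h n * wronskian a p q n =
      wronskian a f p n * wronskian a h q n - wronskian a f q n * wronskian a h p n := by
  simp only [wronskian]; ring

lemma tsum_jacobiMul_mul_of_support_finite {u : ℕ → ℂ} (hu : (Function.support u).Finite)
    (h : ℕ → ℂ) : ∑' n, jacobiMul a b u n * h n = ∑' n, u n * jacobiMul a b h n := by
  obtain ⟨N, hN⟩ := exists_eq_zero_of_support_finite hu
  have hJu : ∀ n ∉ Finset.range (N + 2), jacobiMul a b u n * h n = 0 := fun n hn => by
    rw [jacobiMul_eq_zero_of_lt hN (by rw [Finset.mem_range] at hn; omega), zero_mul]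
  have hu' : ∀ n ∉ Finset.range (N + 2), u n * jacobiMul a b h n = 0 := fun n hn => by
    rw [hN n (by rw [Finset.mem_range] at hn; omega), zero_mul]
  rw [tsum_eq_sum hJu, tsum_eq_sum hu', ← sub_eq_zero, ← Finset.sum_sub_distrib,
    sum_range_jacobiMul_mul_sub, wronskian, hN (N + 1) (by omega), hN (N + 2) (by omega)]
  ring

end JacobiMatrix

section BoundaryForm

variable {a b : ℕ → ℝ}

def boundaryForm (a b : ℕ → ℝ) (f h : ℕ → ℂ) : ℂ :=
  ∑' n, (jacobiMul a b f n * h n - f n * jacobiMul a b h n)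

/-- The maximal domain of `J`, i.e. the domain of the adjoint `T*`. -/
def MemMaxDom (a b : ℕ → ℝ) (f : ℕ → ℂ) : Prop :=
  Memℓp f 2 ∧ Memℓp (jacobiMul a b f) 2

namespace MemMaxDom

lemma of_support_finite {u : ℕ → ℂ} (hu : (Function.support u).Finite) : MemMaxDom a b u :=
  ⟨.of_support_finite hu 2, .of_support_finite (jacobiMul_support_finite hu) 2⟩

lemma add_smul {f g : ℕ → ℂ} (hf : MemMaxDom a b f) (hg : MemMaxDom a b g) (c : ℂ) :
    MemMaxDom a b (f + c • g) := by
  refine ⟨hf.1.add (hg.1.const_smul c), ?_⟩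
  rw [jacobiMul_add, jacobiMul_smul]
  exact hf.2.add (hg.2.const_smul c)

lemma summable_boundary {f h : ℕ → ℂ} (hf : MemMaxDom a b f) (hh : MemMaxDom a b h) :
    Summable fun n => jacobiMul a b f n * h n - f n * jacobiMul a b h n :=
  (hf.2.summable_mul hh.1).sub (hf.1.summable_mul hh.2)

lemma tendsto_wronskian {f h : ℕ → ℂ} (hf : MemMaxDom a b f) (hh : MemMaxDom a b h) :
    Tendsto (wronskian a f h) atTop (𝓝 (boundaryForm a b f h)) := by
  have := ((hf.summable_boundary hh).hasSum.tendsto_sum_nat).comp (tendsto_add_atTop_nat 1)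
  simpa only [Function.comp_def, sum_range_jacobiMul_mul_sub, boundaryForm] using this

end MemMaxDom

lemma boundaryForm_swap (f h : ℕ → ℂ) : boundaryForm a b h f = -boundaryForm a b f h := by
  rw [boundaryForm, boundaryForm, ← tsum_neg]
  exact tsum_congr fun n => by ring

lemma boundaryForm_self (f : ℕ → ℂ) : boundaryForm a b f f = 0 := by
  simp [boundaryForm, mul_comm]

lemma boundaryForm_add_smul_left {f g h : ℕ → ℂ} (hf : MemMaxDom a b f) (hg : MemMaxDom a b g)
    (hh : MemMaxDom a b h) (c : ℂ) :
    boundaryForm a b (f + c • g) h = boundaryForm a b f h + c * boundaryForm a b g h := by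
  rw [boundaryForm, boundaryForm, boundaryForm, ← tsum_mul_left,
    ← (hf.summable_boundary hh).tsum_add ((hg.summable_boundary hh).mul_left c)]
  refine tsum_congr fun n => ?_
  simp only [jacobiMul_add, jacobiMul_smul, Pi.add_apply, Pi.smul_apply, smul_eq_mul]
  ring

lemma boundaryForm_add_smul_right {f g h : ℕ → ℂ} (hf : MemMaxDom a b f)
    (hg : MemMaxDom a b g) (hh : MemMaxDom a b h) (c : ℂ) :
    boundaryForm a b h (f + c • g) = boundaryForm a b h f + c * boundaryForm a b h g := by
  rw [boundaryForm_swap, boundaryForm_add_smul_left hf hg hh, boundaryForm_swap f,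
    boundaryForm_swap g]
  ring

section Eigenvectors

variable {f h : ℕ → ℂ} {u v α β : ℂ}

lemma jacobiMul_mul_sub_of_jacobiMul_eq (hJf : jacobiMul a b f = u • f + α • Pi.single 0 1)
    (hJh : jacobiMul a b h = v • h + β • Pi.single 0 1) (n : ℕ) :
    jacobiMul a b f n * h n - f n * jacobiMul a b h n =
      (u - v) * (f n * h n) + (Pi.single 0 1 : ℕ → ℂ) n * (α * h n - β * f n) := by
  rw [hJf, hJh]
  simp only [Pi.add_apply, Pi.smul_apply, smul_eq_mul]
  ring

lemma boundaryForm_eq_of_jacobiMul_eq (hf : Memℓp f 2) (hh : Memℓp h 2)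
    (hJf : jacobiMul a b f = u • f + α • Pi.single 0 1)
    (hJh : jacobiMul a b h = v • h + β • Pi.single 0 1) :
    boundaryForm a b f h = (u - v) * ∑' n, f n * h n + (α * h 0 - β * f 0) := by
  have hδ : (Pi.single 0 1 : ℕ → ℂ).HasFiniteSupport :=
    (Set.finite_singleton 0).subset Pi.support_single_subset
  rw [boundaryForm, tsum_congr (jacobiMul_mul_sub_of_jacobiMul_eq hJf hJh),
    Summable.tsum_add ((hf.summable_mul hh).mul_left _)
      (summable_of_hasFiniteSupport (hδ.fun_mul_left _)), tsum_mul_left]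
  simp [Pi.single_apply]

lemma wronskian_eq_of_jacobiMul_eq (hJf : jacobiMul a b f = u • f + α • Pi.single 0 1)
    (hJh : jacobiMul a b h = u • h + β • Pi.single 0 1) (n : ℕ) :
    wronskian a f h n = α * h 0 - β * f 0 := by
  rw [← sum_range_jacobiMul_mul_sub (b := b),
    Finset.sum_congr rfl fun n _ => jacobiMul_mul_sub_of_jacobiMul_eq hJf hJh n]
  simp [Pi.single_apply]

end Eigenvectors

end BoundaryForm

section Closure

variable {a b : ℕ → ℝ}

abbrev GraphSpace : Type := WithLp 2 (ℓ²(ℕ, ℂ) × ℓ²(ℕ, ℂ))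

namespace GraphSpace

lemma tendsto_iff {α : Type*} {l : Filter α} {z : α → GraphSpace} {x : GraphSpace} :
    Tendsto z l (𝓝 x) ↔
      Tendsto (fun k => ∑' n, ‖(z k).fst n - x.fst n‖ ^ 2) l (𝓝 0) ∧
        Tendsto (fun k => ∑' n, ‖(z k).snd n - x.snd n‖ ^ 2) l (𝓝 0) := by
  rw [(WithLp.homeomorphProd 2 _ _).isInducing.tendsto_nhds_iff, nhds_prod_eq,
    Filter.tendsto_prod_iff', lp.tendsto_iff_tsum_sq, lp.tendsto_iff_tsum_sq]
  rfl

lemma inner_eq (x y : GraphSpace) :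
    inner ℂ x y = ∑' n, y.fst n * conj (x.fst n) + ∑' n, y.snd n * conj (x.snd n) := by
  rw [WithLp.prod_inner_apply, lp.inner_eq_tsum, lp.inner_eq_tsum]
  simp only [RCLike.inner_apply]
  rfl

end GraphSpace

def graphPoint {f g : ℕ → ℂ} (hf : Memℓp f 2) (hg : Memℓp g 2) : GraphSpace :=
  WithLp.toLp 2 (⟨f, hf⟩, ⟨g, hg⟩)

variable (a b) in
def graphOf (u : ℕ →₀ ℂ) : GraphSpace :=
  graphPoint (MemMaxDom.of_support_finite (a := a) (b := b) u.hasFiniteSupport).1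
    (MemMaxDom.of_support_finite (a := a) (b := b) u.hasFiniteSupport).2

variable (a b) in
def finiteGraph : Submodule ℂ GraphSpace where
  carrier := {x | ∃ u : ℕ →₀ ℂ, (x.fst : ℕ → ℂ) = u ∧ (x.snd : ℕ → ℂ) = jacobiMul a b u}
  add_mem' := by
    rintro x y ⟨u, hu₁, hu₂⟩ ⟨v, hv₁, hv₂⟩
    refine ⟨u + v, ?_, ?_⟩
    · rw [WithLp.add_fst, lp.coeFn_add, hu₁, hv₁, Finsupp.coe_add]
    · rw [WithLp.add_snd, lp.coeFn_add, hu₂, hv₂, Finsupp.coe_add, jacobiMul_add]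
  zero_mem' := ⟨0, rfl, by
    rw [Finsupp.coe_zero, ← zero_smul ℂ (0 : ℕ → ℂ), jacobiMul_smul, zero_smul]; rfl⟩
  smul_mem' := by
    rintro c x ⟨u, hu₁, hu₂⟩
    refine ⟨c • u, ?_, ?_⟩
    · rw [WithLp.smul_fst, lp.coeFn_smul, hu₁, Finsupp.coe_smul]
    · rw [WithLp.smul_snd, lp.coeFn_smul, hu₂, Finsupp.coe_smul, jacobiMul_smul]

lemma graphOf_mem_finiteGraph (u : ℕ →₀ ℂ) : graphOf a b u ∈ finiteGraph a b :=
  ⟨u, rfl, rfl⟩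

lemma jacobiGraph_iff_mem_closure {f g : ℕ → ℂ} :
    jacobiGraph a b f g ↔ ∃ (hf : Memℓp f 2) (hg : Memℓp g 2),
      graphPoint hf hg ∈ (finiteGraph a b).topologicalClosure := by
  constructor
  · rintro ⟨u, hfin, hsum₁, hlim₁, hsum₂, hlim₂⟩
    have hu₀ : MemMaxDom a b (u 0) := .of_support_finite (hfin 0)
    have hf := hu₀.1.of_summable_norm_sub_sq (hsum₁ 0)
    have hg := hu₀.2.of_summable_norm_sub_sq (hsum₂ 0)
    let z k := graphOf a b (Finsupp.ofSupportFinite (u k) (hfin k))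
    have hz : Tendsto z atTop (𝓝 (graphPoint hf hg)) :=
      GraphSpace.tendsto_iff.2 ⟨hlim₁, hlim₂⟩
    exact ⟨hf, hg, mem_closure_of_tendsto hz
      (Eventually.of_forall fun k => graphOf_mem_finiteGraph _)⟩
  · rintro ⟨hf, hg, hx⟩
    obtain ⟨z, hzG, hzx⟩ := mem_closure_iff_seq_limit.1 hx
    choose u hu₁ hu₂ using hzG
    have hlim := GraphSpace.tendsto_iff.1 hzx
    simp only [hu₁, hu₂] at hlim
    refine ⟨fun k => u k, fun k => (u k).hasFiniteSupport, fun k => ?_, hlim.1, fun k => ?_,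
      hlim.2⟩
    · simpa [hu₁] using memℓp_two_iff_summable_sq.1 ((z k).fst.2.sub hf)
    · simpa [hu₂] using memℓp_two_iff_summable_sq.1 ((z k).snd.2.sub hg)

lemma inner_eq_tsum_of_graph {x : GraphSpace} {u : ℕ →₀ ℂ} (hx₁ : (x.fst : ℕ → ℂ) = u)
    (hx₂ : (x.snd : ℕ → ℂ) = jacobiMul a b u) (w : GraphSpace) :
    inner ℂ x w = ∑' n, (w.fst n + jacobiMul a b w.snd n) * conj (u n) := by
  have hstar : (star (u : ℕ → ℂ)).HasFiniteSupport := u.hasFiniteSupport.fun_comp (star_zero _)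
  have hconj : ∑' n, w.snd n * conj (jacobiMul a b u n) =
      ∑' n, jacobiMul a b w.snd n * conj (u n) := by
    simp_rw [mul_comm (w.snd _)]
    have := tsum_jacobiMul_mul_of_support_finite (a := a) (b := b) hstar w.snd
    simpa [jacobiMul_star, mul_comm] using this
  rw [GraphSpace.inner_eq, hx₁, hx₂, hconj, ← Summable.tsum_add]
  · simp_rw [add_mul]
  · exact w.fst.2.summable_mul (Memℓp.of_support_finite hstar 2)
  · exact summable_of_hasFiniteSupport (hstar.fun_mul_right _)

lemma mem_orthogonal_finiteGraph_iff (w : GraphSpace) :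
    w ∈ (finiteGraph a b)ᗮ ↔ (w.fst : ℕ → ℂ) = -jacobiMul a b w.snd := by
  rw [Submodule.mem_orthogonal]
  constructor
  · intro hw
    funext m
    have hm := hw _ (graphOf_mem_finiteGraph (Finsupp.single m 1))
    rw [inner_eq_tsum_of_graph rfl rfl, tsum_eq_single m fun n hn => by simp [hn]] at hm
    simp only [Finsupp.single_eq_same, map_one, mul_one] at hm
    simp only [Pi.neg_apply]
    linear_combination hm
  · rintro hw x ⟨u, hu₁, hu₂⟩
    simp [inner_eq_tsum_of_graph hu₁ hu₂, hw]

lemma tsum_mul_eq_of_mem_closure {x : GraphSpace}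
    (hx : x ∈ (finiteGraph a b).topologicalClosure) {h : ℕ → ℂ} (hh : MemMaxDom a b h) :
    ∑' n, x.snd n * h n = ∑' n, x.fst n * jacobiMul a b h n := by
  let w : GraphSpace := graphPoint hh.2.star_mem.neg hh.1.star_mem
  have hw : w ∈ (finiteGraph a b)ᗮ := by
    rw [mem_orthogonal_finiteGraph_iff]
    exact (congrArg Neg.neg (jacobiMul_star h)).symm
  rw [← Submodule.orthogonal_orthogonal_eq_closure] at hx
  have hwx := Submodule.inner_right_of_mem_orthogonal hw hx
  rw [GraphSpace.inner_eq] at hwx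
  have e₁ : ∀ n, x.fst n * conj (w.fst n) = -(x.fst n * jacobiMul a b h n) := fun n => by
    simp [w, graphPoint]
  have e₂ : ∀ n, x.snd n * conj (w.snd n) = x.snd n * h n := fun n => by
    simp [w, graphPoint]
  rw [tsum_congr e₁, tsum_congr e₂, tsum_neg] at hwx
  linear_combination hwx

lemma jacobiGraph.eq_jacobiMul {f g : ℕ → ℂ} (hfg : jacobiGraph a b f g) :
    g = jacobiMul a b f := by
  obtain ⟨hf, hg, hx⟩ := jacobiGraph_iff_mem_closure.1 hfg
  funext m
  have hδ : (Function.support (Pi.single m 1 : ℕ → ℂ)).Finite :=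
    (Set.finite_singleton m).subset Pi.support_single_subset
  have hm := tsum_mul_eq_of_mem_closure hx (MemMaxDom.of_support_finite hδ)
  simp_rw [mul_comm _ (jacobiMul a b _ _)] at hm
  rw [tsum_jacobiMul_mul_of_support_finite hδ] at hm
  simp only [Pi.single_apply, mul_ite, ite_mul, one_mul, zero_mul, mul_one, mul_zero,
    tsum_ite_eq] at hm
  exact hm

theorem inDomT_iff {f : ℕ → ℂ} :
    inDomT a b f ↔ MemMaxDom a b f ∧ ∀ h, MemMaxDom a b h → boundaryForm a b f h = 0 := by
  constructor
  · rintro ⟨g, hfg⟩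
    obtain ⟨hf, hg, hx⟩ := jacobiGraph_iff_mem_closure.1 hfg
    obtain rfl := hfg.eq_jacobiMul
    refine ⟨⟨hf, hg⟩, fun h hh => ?_⟩
    rw [boundaryForm, Summable.tsum_sub (hg.summable_mul hh.1) (hf.summable_mul hh.2),
      sub_eq_zero]
    exact tsum_mul_eq_of_mem_closure hx hh
  · rintro ⟨hf, hW⟩
    refine ⟨jacobiMul a b f, jacobiGraph_iff_mem_closure.2 ⟨hf.1, hf.2, ?_⟩⟩
    rw [← Submodule.orthogonal_orthogonal_eq_closure, Submodule.mem_orthogonal]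
    intro w hw
    rw [mem_orthogonal_finiteGraph_iff] at hw
    -- `w = (-J Y, Y)`, so pairing it with `(f, Jf)` gives the boundary form of `f` and `Ȳ`.
    have hY : MemMaxDom a b (star (w.snd : ℕ → ℂ)) := by
      refine ⟨w.snd.2.star_mem, ?_⟩
      rw [jacobiMul_star, ← neg_neg (jacobiMul a b _), ← hw]
      exact w.fst.2.neg.star_mem
    have e₁ : ∀ n, f n * conj (w.fst n) = -(f n * jacobiMul a b (star (w.snd : ℕ → ℂ)) n) :=
      fun n => by simp [hw, jacobiMul_star]
    change ∑' n, f n * conj (w.fst n) + ∑' n, jacobiMul a b f n * conj (w.snd n) = 0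
    rw [tsum_congr e₁, tsum_neg, ← hW _ hY, boundaryForm,
      Summable.tsum_sub (hf.2.summable_mul hY.1) (hf.1.summable_mul hY.2)]
    simp only [Pi.star_apply, RCLike.star_def]
    ring

end Closure

namespace JacobiSetup

variable (S : JacobiSetup)

def pSeq (z : ℂ) : ℕ → ℂ := fun n => S.p n z

def qSeq (z : ℂ) : ℕ → ℂ := fun n => S.q n z

lemma jacobiMul_pSeq (z : ℂ) :
    jacobiMul S.a S.b (S.pSeq z) = z • S.pSeq z + (0 : ℂ) • Pi.single 0 1 := by
  have ha₀ : (S.a 0 : ℂ) ≠ 0 := by exact_mod_cast (S.ha 0).ne'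
  funext n
  simp only [jacobiMul, pSeq, Pi.add_apply, Pi.smul_apply, smul_eq_mul, Pi.single_apply]
  cases n with
  | zero =>
    simp only [S.hp0, S.hp1, if_true]
    field_simp
    ring
  | succ n =>
    simp only [Nat.succ_ne_zero, if_false]
    linear_combination -S.hrecp n z

lemma jacobiMul_qSeq (z : ℂ) :
    jacobiMul S.a S.b (S.qSeq z) = z • S.qSeq z + (1 : ℂ) • Pi.single 0 1 := by
  have ha₀ : (S.a 0 : ℂ) ≠ 0 := by exact_mod_cast (S.ha 0).ne'
  funext n
  simp only [jacobiMul, qSeq, Pi.add_apply, Pi.smul_apply, smul_eq_mul, Pi.single_apply]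
  cases n with
  | zero =>
    simp only [S.hq0, S.hq1, if_true]
    field_simp
    ring
  | succ n =>
    simp only [Nat.succ_ne_zero, if_false]
    linear_combination -S.hrecq n z

lemma memℓp_pSeq (z : ℂ) : Memℓp (S.pSeq z) 2 :=
  memℓp_two_iff_summable_sq.2 <| (S.indet z).of_nonneg_of_le (fun _ => sq_nonneg _)
    fun _ => le_add_of_nonneg_right (sq_nonneg _)

lemma memℓp_qSeq (z : ℂ) : Memℓp (S.qSeq z) 2 :=
  memℓp_two_iff_summable_sq.2 <| (S.indet z).of_nonneg_of_le (fun _ => sq_nonneg _)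
    fun _ => le_add_of_nonneg_left (sq_nonneg _)

lemma memMaxDom_pSeq (z : ℂ) : MemMaxDom S.a S.b (S.pSeq z) := by
  refine ⟨S.memℓp_pSeq z, ?_⟩
  rw [jacobiMul_pSeq, zero_smul, add_zero]
  exact (S.memℓp_pSeq z).const_smul z

lemma memMaxDom_qSeq (z : ℂ) : MemMaxDom S.a S.b (S.qSeq z) := by
  refine ⟨S.memℓp_qSeq z, ?_⟩
  rw [jacobiMul_qSeq, one_smul]
  exact ((S.memℓp_qSeq z).const_smul z).add
    (.of_support_finite ((Set.finite_singleton 0).subset Pi.support_single_subset) 2)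

lemma boundaryForm_pSeq_pSeq (u v : ℂ) :
    boundaryForm S.a S.b (S.pSeq u) (S.pSeq v) = nevD S u v := by
  rw [boundaryForm_eq_of_jacobiMul_eq (S.memℓp_pSeq u) (S.memℓp_pSeq v) (S.jacobiMul_pSeq u)
    (S.jacobiMul_pSeq v), nevD]
  simp [pSeq]

lemma boundaryForm_pSeq_qSeq (u v : ℂ) :
    boundaryForm S.a S.b (S.pSeq u) (S.qSeq v) = nevB S u v := by
  rw [boundaryForm_eq_of_jacobiMul_eq (S.memℓp_pSeq u) (S.memℓp_qSeq v) (S.jacobiMul_pSeq u)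
    (S.jacobiMul_qSeq v), nevB]
  simp only [pSeq, qSeq, zero_mul, S.hp0, mul_one, zero_sub]
  ring

lemma boundaryForm_qSeq_pSeq (u v : ℂ) :
    boundaryForm S.a S.b (S.qSeq u) (S.pSeq v) = nevC S u v := by
  rw [boundaryForm_eq_of_jacobiMul_eq (S.memℓp_qSeq u) (S.memℓp_pSeq v) (S.jacobiMul_qSeq u)
    (S.jacobiMul_pSeq v), nevC]
  simp only [qSeq, pSeq, S.hp0, mul_one, zero_mul, sub_zero]
  ring

lemma boundaryForm_qSeq_qSeq (u v : ℂ) :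
    boundaryForm S.a S.b (S.qSeq u) (S.qSeq v) = nevA S u v := by
  rw [boundaryForm_eq_of_jacobiMul_eq (S.memℓp_qSeq u) (S.memℓp_qSeq v) (S.jacobiMul_qSeq u)
    (S.jacobiMul_qSeq v), nevA]
  simp [qSeq, S.hq0]

lemma wronskian_pSeq_qSeq (z : ℂ) (n : ℕ) : wronskian S.a (S.pSeq z) (S.qSeq z) n = -1 := by
  rw [wronskian_eq_of_jacobiMul_eq (S.jacobiMul_pSeq z) (S.jacobiMul_qSeq z)]
  simp [pSeq, S.hp0]

variable {f h v : ℕ → ℂ}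

lemma boundaryForm_eq_mul_sub_mul (hf : MemMaxDom S.a S.b f) (hh : MemMaxDom S.a S.b h)
    (z : ℂ) :
    boundaryForm S.a S.b f h =
      boundaryForm S.a S.b f (S.qSeq z) * boundaryForm S.a S.b h (S.pSeq z) -
        boundaryForm S.a S.b f (S.pSeq z) * boundaryForm S.a S.b h (S.qSeq z) := by
  have hp := S.memMaxDom_pSeq z
  have hq := S.memMaxDom_qSeq z
  have hpt (n : ℕ) : wronskian S.a f (S.qSeq z) n * wronskian S.a h (S.pSeq z) n -
      wronskian S.a f (S.pSeq z) n * wronskian S.a h (S.qSeq z) n = wronskian S.a f h n := by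
    have := wronskian_mul_wronskian (a := S.a) f h (S.pSeq z) (S.qSeq z) n
    rw [S.wronskian_pSeq_qSeq] at this
    linear_combination this
  exact tendsto_nhds_unique
    ((((hf.tendsto_wronskian hq).mul (hh.tendsto_wronskian hp)).sub
      ((hf.tendsto_wronskian hp).mul (hh.tendsto_wronskian hq))).congr hpt)
    (hf.tendsto_wronskian hh) |>.symm

theorem inDomT_iff_boundaryForm_eq_zero (z : ℂ) :
    inDomT S.a S.b f ↔ MemMaxDom S.a S.b f ∧
      boundaryForm S.a S.b f (S.pSeq z) = 0 ∧ boundaryForm S.a S.b f (S.qSeq z) = 0 := by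
  rw [inDomT_iff]
  constructor
  · rintro ⟨hf, hW⟩
    exact ⟨hf, hW _ (S.memMaxDom_pSeq z), hW _ (S.memMaxDom_qSeq z)⟩
  · rintro ⟨hf, hp, hq⟩
    refine ⟨hf, fun h hh => ?_⟩
    rw [S.boundaryForm_eq_mul_sub_mul hf hh z, hp, hq]
    ring

theorem exists_inDomT_add_mul_iff (hf : MemMaxDom S.a S.b f) (hv : MemMaxDom S.a S.b v)
    (hv' : ¬inDomT S.a S.b v) :
    (∃ (s : ℕ → ℂ) (c : ℂ), inDomT S.a S.b s ∧ ∀ n, f n = s n + c * v n) ↔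
      boundaryForm S.a S.b f v = 0 := by
  constructor
  · rintro ⟨s, c, hs, hfs⟩
    obtain rfl : f = s + c • v := funext hfs
    obtain ⟨hs, hsW⟩ := inDomT_iff.1 hs
    rw [boundaryForm_add_smul_left hs hv hv, boundaryForm_self, hsW v hv, mul_zero, add_zero]
  · intro hfv
    rw [S.boundaryForm_eq_mul_sub_mul hf hv 0] at hfv
    obtain ⟨c, hcp, hcq⟩ : ∃ c : ℂ,
        boundaryForm S.a S.b f (S.pSeq 0) = c * boundaryForm S.a S.b v (S.pSeq 0) ∧
          boundaryForm S.a S.b f (S.qSeq 0) = c * boundaryForm S.a S.b v (S.qSeq 0) := by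
      by_cases hvp : boundaryForm S.a S.b v (S.pSeq 0) = 0
      · have hvq : boundaryForm S.a S.b v (S.qSeq 0) ≠ 0 := fun hvq =>
          hv' ((S.inDomT_iff_boundaryForm_eq_zero 0).2 ⟨hv, hvp, hvq⟩)
        refine ⟨boundaryForm S.a S.b f (S.qSeq 0) / boundaryForm S.a S.b v (S.qSeq 0), ?_, ?_⟩
        · rw [hvp, mul_zero, zero_sub, neg_eq_zero, mul_eq_zero] at hfv
          rw [hvp, mul_zero]
          exact hfv.resolve_right hvq
        · field_simp
      · refine ⟨boundaryForm S.a S.b f (S.pSeq 0) / boundaryForm S.a S.b v (S.pSeq 0), ?_, ?_⟩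
        · field_simp
        · field_simp
          linear_combination hfv
    refine ⟨f + (-c) • v, c, (S.inDomT_iff_boundaryForm_eq_zero 0).2
      ⟨hf.add_smul hv _, ?_, ?_⟩, fun n => by simp⟩
    · rw [boundaryForm_add_smul_left hf hv (S.memMaxDom_pSeq 0), hcp]
      ring
    · rw [boundaryForm_add_smul_left hf hv (S.memMaxDom_qSeq 0), hcq]
      ring

end JacobiSetup

/-- Membership of `𝔭_λ` and `𝔮_λ` in `D(T) ⊕ ℂ(𝔮₀ + t𝔭₀)` (the domain of the self-adjoint
extension `T_t`) is characterized by `B(λ) + tD(λ) = 0` resp. `A(λ) + tC(λ) = 0`; for the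
extension with defect vector `𝔭₀` the conditions are `D(λ) = 0` resp. `C(λ) = 0`. -/
theorem stmt10 (S : JacobiSetup) (lam : ℂ) :
    (∀ t : ℝ,
      ((∃ (s : ℕ → ℂ) (c : ℂ), inDomT S.a S.b s ∧
          ∀ n, S.p n lam = s n + c * (S.q n 0 + (t : ℂ) * S.p n 0)) ↔
        nevB S lam 0 + (t : ℂ) * nevD S lam 0 = 0) ∧
      ((∃ (s : ℕ → ℂ) (c : ℂ), inDomT S.a S.b s ∧
          ∀ n, S.q n lam = s n + c * (S.q n 0 + (t : ℂ) * S.p n 0)) ↔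
        nevA S lam 0 + (t : ℂ) * nevC S lam 0 = 0)) ∧
    ((∃ (s : ℕ → ℂ) (c : ℂ), inDomT S.a S.b s ∧
        ∀ n, S.p n lam = s n + c * S.p n 0) ↔ nevD S lam 0 = 0) ∧
    ((∃ (s : ℕ → ℂ) (c : ℂ), inDomT S.a S.b s ∧
        ∀ n, S.q n lam = s n + c * S.p n 0) ↔ nevC S lam 0 = 0) := by
  have hp := S.memMaxDom_pSeq
  have hq := S.memMaxDom_qSeq
  have hv (t : ℝ) := (hq 0).add_smul (hp 0) (t : ℂ)
  have hv_not_mem (t : ℝ) : ¬inDomT S.a S.b (S.qSeq 0 + (t : ℂ) • S.pSeq 0) := fun hv' => by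
    have := ((S.inDomT_iff_boundaryForm_eq_zero 0).1 hv').2.1
    rw [boundaryForm_add_smul_left (hq 0) (hp 0) (hp 0), boundaryForm_self,
      S.boundaryForm_qSeq_pSeq] at this
    simp [nevC] at this
  have hp_not_mem : ¬inDomT S.a S.b (S.pSeq 0) := fun hp' => by
    have := ((S.inDomT_iff_boundaryForm_eq_zero 0).1 hp').2.2
    rw [S.boundaryForm_pSeq_qSeq] at this
    simp [nevB] at this
  have hW {f : ℕ → ℂ} (hf : MemMaxDom S.a S.b f) (t : ℝ) :=
    boundaryForm_add_smul_right (hq 0) (hp 0) hf (t : ℂ)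
  refine ⟨fun t => ⟨?_, ?_⟩, ?_, ?_⟩
  · rw [← S.boundaryForm_pSeq_qSeq, ← S.boundaryForm_pSeq_pSeq, ← hW (hp lam)]
    exact S.exists_inDomT_add_mul_iff (hp lam) (hv t) (hv_not_mem t)
  · rw [← S.boundaryForm_qSeq_qSeq, ← S.boundaryForm_qSeq_pSeq, ← hW (hq lam)]
    exact S.exists_inDomT_add_mul_iff (hq lam) (hv t) (hv_not_mem t)
  · rw [← S.boundaryForm_pSeq_pSeq]
    exact S.exists_inDomT_add_mul_iff (hp lam) (hp 0) hp_not_mem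
  · rw [← S.boundaryForm_qSeq_pSeq]
    exact S.exists_inDomT_add_mul_iff (hq lam) (hp 0) hp_not_mem
end
end

section
/- For all z, z₀ ∈ ℂ with z ≠ z₀, one has Σₙ |(pₙ(z) − pₙ(z₀))/(z − z₀)|² ≤ ‖𝔭_z‖²·(‖𝔭_{z₀}‖² + ‖𝔮_{z₀}‖²)². Consequently, Σₙ |pₙ'(z₀)|² ≤ ‖𝔭_{z₀}‖²·(‖𝔭_{z₀}‖² + ‖𝔮_{z₀}‖²)². -/
open Filter Topology MeasureTheory

noncomputable section

/-!
By the Christoffel–Darboux identities and the Wronskian identity `aₙ(qₙ₊₁pₙ − pₙ₊₁qₙ) = 1`,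
the difference quotient is a truncated reproducing-kernel sum,
`(pₙ(z) − pₙ(z₀))/(z − z₀) = ∑_{k<n} (qₙ(z₀)pₖ(z₀) − pₙ(z₀)qₖ(z₀)) pₖ(z)`,
and letting `z → z₀` gives the same formula for `pₙ'(z₀)`. Cauchy–Schwarz bounds the `n`-th
term by `‖𝔭_z‖² (‖𝔭_{z₀}‖² + ‖𝔮_{z₀}‖²)(|pₙ(z₀)|² + |qₙ(z₀)|²)`, and summing over `n` gives
the claim.
-/

open Finset

lemma l2norm_sq (f : ℕ → ℂ) : l2norm f ^ 2 = ∑' n, ‖f n‖ ^ 2 :=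
  Real.sq_sqrt (tsum_nonneg fun _ => by positivity)

/-- The lower-triangular operator with kernel `gₙfₖ − fₙgₖ` (`k < n`) applied to `x`. -/
def volterraSum (f g x : ℕ → ℂ) (n : ℕ) : ℂ :=
  g n * ∑ k ∈ range n, x k * f k - f n * ∑ k ∈ range n, x k * g k

section VolterraSum

variable {f g x : ℕ → ℂ}

lemma norm_sum_range_mul_sq_le (hx : Summable fun n => ‖x n‖ ^ 2)
    (hf : Summable fun n => ‖f n‖ ^ 2) (n : ℕ) :
    ‖∑ k ∈ range n, x k * f k‖ ^ 2 ≤ (∑' k, ‖x k‖ ^ 2) * ∑' k, ‖f k‖ ^ 2 := by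
  calc ‖∑ k ∈ range n, x k * f k‖ ^ 2
      ≤ (∑ k ∈ range n, ‖x k‖ * ‖f k‖) ^ 2 := by
        gcongr
        exact (norm_sum_le _ _).trans_eq (by simp only [norm_mul])
    _ ≤ (∑ k ∈ range n, ‖x k‖ ^ 2) * ∑ k ∈ range n, ‖f k‖ ^ 2 := sum_mul_sq_le_sq_mul_sq _ _ _
    _ ≤ (∑' k, ‖x k‖ ^ 2) * ∑' k, ‖f k‖ ^ 2 := by
        gcongr
        · exact hx.sum_le_tsum _ fun _ _ => by positivity
        · exact hf.sum_le_tsum _ fun _ _ => by positivity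

lemma norm_sq_volterraSum_le (hf : Summable fun n => ‖f n‖ ^ 2)
    (hg : Summable fun n => ‖g n‖ ^ 2) (hx : Summable fun n => ‖x n‖ ^ 2) (n : ℕ) :
    ‖volterraSum f g x n‖ ^ 2 ≤
      ((∑' k, ‖x k‖ ^ 2) * ((∑' k, ‖f k‖ ^ 2) + ∑' k, ‖g k‖ ^ 2)) *
        (‖f n‖ ^ 2 + ‖g n‖ ^ 2) := by
  set A := ‖∑ k ∈ range n, x k * f k‖
  set B := ‖∑ k ∈ range n, x k * g k‖
  have hA := norm_sum_range_mul_sq_le hx hf n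
  have hB := norm_sum_range_mul_sq_le hx hg n
  have hnorm : ‖volterraSum f g x n‖ ≤ ‖g n‖ * A + ‖f n‖ * B :=
    (norm_sub_le _ _).trans_eq (by simp only [norm_mul, A, B])
  calc ‖volterraSum f g x n‖ ^ 2
      ≤ (‖g n‖ * A + ‖f n‖ * B) ^ 2 := by gcongr
    _ ≤ (‖f n‖ ^ 2 + ‖g n‖ ^ 2) * (A ^ 2 + B ^ 2) := by
        nlinarith [sq_nonneg (‖g n‖ * B - ‖f n‖ * A)]
    _ ≤ _ := by
        rw [mul_comm]
        gcongr
        linarith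

lemma summable_sq_volterraSum (hf : Summable fun n => ‖f n‖ ^ 2)
    (hg : Summable fun n => ‖g n‖ ^ 2) (hx : Summable fun n => ‖x n‖ ^ 2) :
    Summable fun n => ‖volterraSum f g x n‖ ^ 2 :=
  ((hf.add hg).mul_left _).of_nonneg_of_le (fun _ => by positivity)
    (norm_sq_volterraSum_le hf hg hx)

lemma tsum_sq_volterraSum_le (hf : Summable fun n => ‖f n‖ ^ 2)
    (hg : Summable fun n => ‖g n‖ ^ 2) (hx : Summable fun n => ‖x n‖ ^ 2) :
    ∑' n, ‖volterraSum f g x n‖ ^ 2 ≤ l2norm x ^ 2 * (l2norm f ^ 2 + l2norm g ^ 2) ^ 2 := by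
  calc ∑' n, ‖volterraSum f g x n‖ ^ 2
      ≤ ∑' n, ((∑' k, ‖x k‖ ^ 2) * ((∑' k, ‖f k‖ ^ 2) + ∑' k, ‖g k‖ ^ 2)) *
          (‖f n‖ ^ 2 + ‖g n‖ ^ 2) :=
        (summable_sq_volterraSum hf hg hx).tsum_le_tsum (norm_sq_volterraSum_le hf hg hx)
          ((hf.add hg).mul_left _)
    _ = l2norm x ^ 2 * (l2norm f ^ 2 + l2norm g ^ 2) ^ 2 := by
        rw [tsum_mul_left, hf.tsum_add hg, l2norm_sq, l2norm_sq, l2norm_sq]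
        ring

end VolterraSum

namespace JacobiSetup

variable (S : JacobiSetup)

lemma a_ne_zero (n : ℕ) : (S.a n : ℂ) ≠ 0 :=
  Complex.ofReal_ne_zero.2 (S.ha n).ne'

lemma christoffelDarboux_p_p (u v : ℂ) (n : ℕ) :
    (u - v) * ∑ k ∈ range (n + 1), S.p k u * S.p k v =
      S.a n * (S.p (n + 1) u * S.p n v - S.p n u * S.p (n + 1) v) := by
  induction n with
  | zero =>
    rw [range_one, sum_singleton, S.hp0, S.hp0, S.hp1, S.hp1]
    field_simp [S.a_ne_zero 0]
    ring
  | succ m ih =>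
    rw [sum_range_succ, mul_add]
    linear_combination ih + S.p (m + 1) v * S.hrecp m u - S.p (m + 1) u * S.hrecp m v

lemma christoffelDarboux_p_q (u v : ℂ) (n : ℕ) :
    (u - v) * ∑ k ∈ range (n + 1), S.p k u * S.q k v =
      S.a n * (S.p (n + 1) u * S.q n v - S.p n u * S.q (n + 1) v) + 1 := by
  induction n with
  | zero =>
    rw [range_one, sum_singleton, S.hp0, S.hq0, S.hp1, S.hq1]
    field_simp [S.a_ne_zero 0]
    ring
  | succ m ih =>
    rw [sum_range_succ, mul_add]
    linear_combination ih + S.q (m + 1) v * S.hrecp m u - S.p (m + 1) u * S.hrecq m v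

lemma wronskian (v : ℂ) (n : ℕ) :
    S.a n * (S.q (n + 1) v * S.p n v - S.p (n + 1) v * S.q n v) = 1 := by
  induction n with
  | zero =>
    rw [S.hp0, S.hq0, S.hq1]
    field_simp [S.a_ne_zero 0]
    ring
  | succ m ih =>
    linear_combination ih + S.q (m + 1) v * S.hrecp m v - S.p (m + 1) v * S.hrecq m v

lemma p_sub_p (u v : ℂ) (n : ℕ) :
    S.p n u - S.p n v = (u - v) * volterraSum (S.p · v) (S.q · v) (S.p · u) n := by
  cases n with
  | zero => simp [volterraSum, S.hp0]
  | succ m =>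
    unfold volterraSum
    linear_combination S.p (m + 1) v * S.christoffelDarboux_p_q u v m -
      S.q (m + 1) v * S.christoffelDarboux_p_p u v m - S.p (m + 1) u * S.wronskian v m

lemma p_add_two (n : ℕ) (z : ℂ) :
    S.p (n + 2) z = ((z - S.b (n + 1)) * S.p (n + 1) z - S.a n * S.p n z) / S.a (n + 1) := by
  field_simp [S.a_ne_zero (n + 1)]
  linear_combination -S.hrecp n z

lemma differentiable_p (n : ℕ) : Differentiable ℂ (S.p n) := by
  induction n using Nat.twoStepInduction with
  | zero => simpa only [funext S.hp0] using differentiable_const 1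
  | one => simpa only [funext S.hp1] using (differentiable_id.sub_const _).div_const _
  | more m hm hm1 =>
    rw [funext (S.p_add_two m)]
    fun_prop

lemma hasDerivAt_p (v : ℂ) (n : ℕ) :
    HasDerivAt (S.p n) (volterraSum (S.p · v) (S.q · v) (S.p · v) n) v := by
  have hF : Differentiable ℂ (fun u => volterraSum (S.p · v) (S.q · v) (S.p · u) n) := by
    have := S.differentiable_p
    unfold volterraSum
    fun_prop
  have hp : S.p n = fun u => S.p n v + (u - v) * volterraSum (S.p · v) (S.q · v) (S.p · u) n :=
    funext fun u => by rw [← S.p_sub_p, add_sub_cancel]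
  rw [hp]
  simpa using (((hasDerivAt_id v).sub_const v).mul (hF v).hasDerivAt).const_add (S.p n v)

lemma summable_sq_p (z : ℂ) : Summable fun n => ‖S.p n z‖ ^ 2 :=
  (S.indet z).of_nonneg_of_le (fun _ => by positivity) fun _ => le_add_of_nonneg_right (by positivity)

lemma summable_sq_q (z : ℂ) : Summable fun n => ‖S.q n z‖ ^ 2 :=
  (S.indet z).of_nonneg_of_le (fun _ => by positivity) fun _ => le_add_of_nonneg_left (by positivity)

end JacobiSetup

/-- The difference-quotient bound
`∑ₙ |(pₙ(z) − pₙ(z₀))/(z − z₀)|² ≤ ‖𝔭_z‖²(‖𝔭_{z₀}‖² + ‖𝔮_{z₀}‖²)²`, and consequently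
`∑ₙ |pₙ'(z₀)|² ≤ ‖𝔭_{z₀}‖²(‖𝔭_{z₀}‖² + ‖𝔮_{z₀}‖²)²`. -/
theorem stmt14 (S : JacobiSetup) (z z₀ : ℂ) (hz : z ≠ z₀) :
    (Summable (fun n => ‖(S.p n z - S.p n z₀) / (z - z₀)‖ ^ 2) ∧
      ∑' n, ‖(S.p n z - S.p n z₀) / (z - z₀)‖ ^ 2 ≤
        (l2norm fun n => S.p n z) ^ 2 *
          ((l2norm fun n => S.p n z₀) ^ 2 + (l2norm fun n => S.q n z₀) ^ 2) ^ 2) ∧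
    (Summable (fun n => ‖deriv (S.p n) z₀‖ ^ 2) ∧
      ∑' n, ‖deriv (S.p n) z₀‖ ^ 2 ≤
        (l2norm fun n => S.p n z₀) ^ 2 *
          ((l2norm fun n => S.p n z₀) ^ 2 + (l2norm fun n => S.q n z₀) ^ 2) ^ 2) := by
  have hquot (n : ℕ) : (S.p n z - S.p n z₀) / (z - z₀) =
      volterraSum (S.p · z₀) (S.q · z₀) (S.p · z) n := by
    rw [S.p_sub_p, mul_div_cancel_left₀ _ (sub_ne_zero.2 hz)]
  simp only [hquot, fun n => (S.hasDerivAt_p z₀ n).deriv]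
  have hp₀ := S.summable_sq_p z₀
  have hq₀ := S.summable_sq_q z₀
  exact ⟨⟨summable_sq_volterraSum hp₀ hq₀ (S.summable_sq_p z),
      tsum_sq_volterraSum_le hp₀ hq₀ (S.summable_sq_p z)⟩,
    ⟨summable_sq_volterraSum hp₀ hq₀ hp₀, tsum_sq_volterraSum_le hp₀ hq₀ hp₀⟩⟩
end
end

section
/- Fix z₀ ∈ ℂ and let Ξ_{z₀} : ℓ² → ℓ² be the bounded linear operator sending c to ξ(c, z₀), where ξ(c, z₀)ₖ := Σ_{n=k+1}^∞ cₙ·(qₙ(z₀)pₖ(z₀) − pₙ(z₀)qₖ(z₀)). Then: (a) for every c ∈ ℓ², Ξ_{z₀}(c) ∈ D(T) and (T − z₀)·Ξ_{z₀}(c) + F_c(z₀)·e₀ = c; (b) the range of Ξ_{z₀} equals D(T); (c) the kernel of Ξ_{z₀} equals ℂ·e₀; (d) for every v ∈ D(T), Ξ_{z₀}((T − z₀)v) = v, i.e., the restriction of Ξ_{z₀} to (T − z₀)(D(T)) is a bijection onto D(T) equal to (T − z₀)⁻¹. -/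
open Filter Topology MeasureTheory

noncomputable section

/-- The coefficients `a_{n,k}(z₀) = qₙ(z₀)pₖ(z₀) − pₙ(z₀)qₖ(z₀)`. -/
def coeffA (S : JacobiSetup) (z₀ : ℂ) (n k : ℕ) : ℂ :=
  S.q n z₀ * S.p k z₀ - S.p n z₀ * S.q k z₀

/-- The sequence `ξ(c,z₀)` with `ξₖ = ∑_{n≥k+1} cₙ a_{n,k}(z₀)`. -/
def xiSeq (S : JacobiSetup) (c : ℕ → ℂ) (z₀ : ℂ) (k : ℕ) : ℂ :=
  ∑' n : ℕ, c (k + 1 + n) * coeffA S z₀ (k + 1 + n) k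

/-- The entire function `F_c(z) = ∑ₙ cₙ pₙ(z)`. -/
def Ffun (S : JacobiSetup) (c : ℕ → ℂ) (z : ℂ) : ℂ := ∑' n, c n * S.p n z

/-- The first standard basis vector `e₀` of `ℓ²`. -/
def e0 : ℕ → ℂ := fun n => if n = 0 then 1 else 0

/-!
Write `ξ(c)ₖ = pₖ Qₖ₊₁ - qₖ Pₖ₊₁` with the tails `Pₘ = ∑_{n ≥ m} cₙ pₙ`, `Qₘ = ∑_{n ≥ m} cₙ qₙ`.
Since `p` and `q` solve the three-term recurrence and have Wronskian
`aₖ (qₖ₊₁ pₖ - pₖ₊₁ qₖ) = 1`, this gives `J ξ(c) = z₀ ξ(c) + c - F_c(z₀) e₀` for every `c ∈ ℓ²`,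
while summation by parts gives `ξ((J - z₀) w) = w` for finitely supported `w`.
The kernel obeys `|qₙ pₖ - pₙ qₖ|² ≤ ρₙ ρₖ` with `ρₙ = |pₙ|² + |qₙ|²` summable, so `Ξ` is
Hilbert–Schmidt and in particular continuous on `ℓ²`. Approximating `c` by its truncations, whose
images are finitely supported, puts `ξ(c)` in `D(T)`; approximating `v ∈ D(T)` by finitely
supported vectors gives `Ξ((T - z₀) v) = v`. Range and kernel follow from these two identities.
-/

open Function

section SqSummable

variable {E : Type*} [NormedAddCommGroup E]

def SqSummable (f : ℕ → E) : Prop := Summable fun n => ‖f n‖ ^ 2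

lemma norm_add_sq_le (x y : E) : ‖x + y‖ ^ 2 ≤ 2 * (‖x‖ ^ 2 + ‖y‖ ^ 2) := by
  nlinarith [pow_le_pow_left₀ (norm_nonneg _) (norm_add_le x y) 2, sq_nonneg (‖x‖ - ‖y‖)]

lemma norm_sub_sq_le (x y : E) : ‖x - y‖ ^ 2 ≤ 2 * (‖x‖ ^ 2 + ‖y‖ ^ 2) := by
  simpa only [sub_eq_add_neg, norm_neg] using norm_add_sq_le x (-y)

variable {f g : ℕ → E}

lemma SqSummable.congr (hf : SqSummable f) (hfg : ∀ n, f n = g n) : SqSummable g :=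
  funext hfg ▸ hf

lemma SqSummable.add (hf : SqSummable f) (hg : SqSummable g) :
    SqSummable fun n => f n + g n :=
  Summable.of_nonneg_of_le (fun _ => by positivity) (fun _ => norm_add_sq_le _ _)
    ((Summable.add hf hg).mul_left 2)

lemma SqSummable.sub (hf : SqSummable f) (hg : SqSummable g) :
    SqSummable fun n => f n - g n :=
  Summable.of_nonneg_of_le (fun _ => by positivity) (fun _ => norm_sub_sq_le _ _)
    ((Summable.add hf hg).mul_left 2)

lemma sqSummable_of_finite_support (hf : (support f).Finite) : SqSummable f :=
  summable_of_hasFiniteSupport <| hf.subset fun n hn => by simpa using hn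

lemma finite_support_iff_eventually_eq_zero :
    (support f).Finite ↔ ∀ᶠ n in atTop, f n = 0 := by
  rw [← Nat.cofinite_eq_atTop, eventually_cofinite]
  rfl

end SqSummable

lemma summable_mul_of_summable_sq {f g : ℕ → ℝ} (hf : Summable fun n => f n ^ 2)
    (hg : Summable fun n => g n ^ 2) : Summable fun n => f n * g n :=
  .of_norm_bounded ((hf.add hg).div_const 2) fun n => by
    rw [Real.norm_eq_abs, abs_mul, le_div_iff₀ two_pos, ← sq_abs (f n), ← sq_abs (g n)]
    linarith [two_mul_le_add_sq |f n| |g n|]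

lemma tsum_mul_sq_le {f g : ℕ → ℝ} (hf : Summable fun n => f n ^ 2)
    (hg : Summable fun n => g n ^ 2) :
    (∑' n, f n * g n) ^ 2 ≤ (∑' n, f n ^ 2) * ∑' n, g n ^ 2 :=
  le_of_tendsto_of_tendsto' ((summable_mul_of_summable_sq hf hg).hasSum.tendsto_sum_nat.pow 2)
    (hf.hasSum.tendsto_sum_nat.mul hg.hasSum.tendsto_sum_nat)
    fun _ => Finset.sum_mul_sq_le_sq_mul_sq _ _ _

lemma tsum_nat_add_le {f : ℕ → ℝ} (hf : Summable f) (h0 : ∀ n, 0 ≤ f n) (m : ℕ) :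
    ∑' n, f (m + n) ≤ ∑' n, f n :=
  tsum_comp_le_tsum_of_inj hf h0 (add_right_injective m)

section NormedRing

variable {R : Type*} [NormedRing R] {x y : ℕ → R}

lemma SqSummable.const_mul (hx : SqSummable x) (a : R) : SqSummable fun n => a * x n :=
  Summable.of_nonneg_of_le (fun _ => by positivity)
    (fun n => by rw [← mul_pow]; gcongr; exact norm_mul_le _ _) (hx.mul_left (‖a‖ ^ 2))

lemma summable_norm_mul_of_sqSummable (hx : SqSummable x) (hy : SqSummable y) :
    Summable fun n => ‖x n * y n‖ :=
  .of_nonneg_of_le (fun _ => norm_nonneg _) (fun _ => norm_mul_le _ _)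
    (summable_mul_of_summable_sq (f := (‖x ·‖)) (g := (‖y ·‖)) hx hy)

lemma norm_tsum_mul_sq_le (hx : SqSummable x) (hy : SqSummable y) :
    ‖∑' n, x n * y n‖ ^ 2 ≤ (∑' n, ‖x n‖ ^ 2) * ∑' n, ‖y n‖ ^ 2 := by
  have hxy := summable_norm_mul_of_sqSummable hx hy
  have hle : ‖∑' n, x n * y n‖ ≤ ∑' n, ‖x n‖ * ‖y n‖ :=
    (norm_tsum_le_tsum_norm hxy).trans <| hxy.tsum_le_tsum (fun _ => norm_mul_le _ _) <|
      summable_mul_of_summable_sq (f := (‖x ·‖)) (g := (‖y ·‖)) hx hy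
  exact (pow_le_pow_left₀ (norm_nonneg _) hle 2).trans <|
    tsum_mul_sq_le (f := (‖x ·‖)) (g := (‖y ·‖)) hx hy

end NormedRing

section L2Tendsto

variable {E : Type*} [NormedAddCommGroup E] {u v w : ℕ → ℕ → E} {f g h : ℕ → E}

def L2Tendsto (u : ℕ → ℕ → E) (f : ℕ → E) : Prop :=
  (∀ k, SqSummable fun n => u k n - f n) ∧
    Tendsto (fun k => ∑' n, ‖u k n - f n‖ ^ 2) atTop (𝓝 0)

lemma l2Tendsto_of_tsum_le {b : ℕ → ℝ} (hw : ∀ k, SqSummable fun n => w k n - h n)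
    (hle : ∀ k, ∑' n, ‖w k n - h n‖ ^ 2 ≤ b k) (hb : Tendsto b atTop (𝓝 0)) : L2Tendsto w h :=
  ⟨hw, squeeze_zero (fun _ => tsum_nonneg fun _ => by positivity) hle hb⟩

lemma L2Tendsto.of_norm_le_add (hu : L2Tendsto u f) (hv : L2Tendsto v g)
    (hle : ∀ k n, ‖w k n - h n‖ ≤ ‖u k n - f n‖ + ‖v k n - g n‖) : L2Tendsto w h := by
  have hsq : ∀ k n, ‖w k n - h n‖ ^ 2 ≤ 2 * (‖u k n - f n‖ ^ 2 + ‖v k n - g n‖ ^ 2) := fun k n => by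
    nlinarith [pow_le_pow_left₀ (norm_nonneg _) (hle k n) 2,
      sq_nonneg (‖u k n - f n‖ - ‖v k n - g n‖)]
  have hsum : ∀ k, Summable fun n => 2 * (‖u k n - f n‖ ^ 2 + ‖v k n - g n‖ ^ 2) := fun k =>
    (Summable.add (hu.1 k) (hv.1 k)).mul_left 2
  refine l2Tendsto_of_tsum_le
    (fun k => .of_nonneg_of_le (fun _ => by positivity) (hsq k) (hsum k))
    (fun k => ?_) (by simpa using (hu.2.add hv.2).const_mul 2)
  calc ∑' n, ‖w k n - h n‖ ^ 2
      ≤ ∑' n, 2 * (‖u k n - f n‖ ^ 2 + ‖v k n - g n‖ ^ 2) :=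
        Summable.tsum_le_tsum (hsq k) (.of_nonneg_of_le (fun _ => by positivity) (hsq k) (hsum k))
          (hsum k)
    _ = 2 * (∑' n, ‖u k n - f n‖ ^ 2 + ∑' n, ‖v k n - g n‖ ^ 2) := by
        rw [tsum_mul_left, Summable.tsum_add (hu.1 k) (hv.1 k)]

lemma L2Tendsto.add (hu : L2Tendsto u f) (hv : L2Tendsto v g) :
    L2Tendsto (fun k n => u k n + v k n) fun n => f n + g n :=
  hu.of_norm_le_add hv fun k n => by rw [add_sub_add_comm]; exact norm_add_le _ _

lemma L2Tendsto.sub (hu : L2Tendsto u f) (hv : L2Tendsto v g) :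
    L2Tendsto (fun k n => u k n - v k n) fun n => f n - g n :=
  hu.of_norm_le_add hv fun k n => by rw [sub_sub_sub_comm]; exact norm_sub_le _ _

lemma L2Tendsto.sqSummable (hu : L2Tendsto u f) {k : ℕ} (hk : SqSummable (u k)) : SqSummable f :=
  (hk.sub (hu.1 k)).congr fun _ => sub_sub_cancel _ _

lemma L2Tendsto.sqSummable_apply (hu : L2Tendsto u f) (hf : SqSummable f) (k : ℕ) :
    SqSummable (u k) :=
  ((hu.1 k).add hf).congr fun _ => sub_add_cancel _ _

lemma L2Tendsto.unique (hf : L2Tendsto u f) (hg : L2Tendsto u g) : f = g := by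
  funext n
  have hle : ∀ k, ‖f n - g n‖ ^ 2 ≤ 2 * (∑' m, ‖u k m - f m‖ ^ 2 + ∑' m, ‖u k m - g m‖ ^ 2) :=
    fun k => calc
      ‖f n - g n‖ ^ 2 = ‖(u k n - g n) - (u k n - f n)‖ ^ 2 := by rw [sub_sub_sub_cancel_left]
      _ ≤ 2 * (‖u k n - g n‖ ^ 2 + ‖u k n - f n‖ ^ 2) := norm_sub_sq_le _ _
      _ ≤ _ := by
        rw [add_comm (‖u k n - g n‖ ^ 2)]
        gcongr
        · exact (hf.1 k).le_tsum n fun _ _ => by positivity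
        · exact (hg.1 k).le_tsum n fun _ _ => by positivity
  have h0 : ‖f n - g n‖ ^ 2 ≤ 0 :=
    ge_of_tendsto' (by simpa using (hf.2.add hg.2).const_mul 2) hle
  exact sub_eq_zero.1 (norm_eq_zero.1 (pow_eq_zero_iff two_ne_zero |>.1
    (le_antisymm h0 (by positivity))))

lemma l2Tendsto_truncate (hf : SqSummable f) :
    L2Tendsto (fun N n => if n < N then f n else 0) f := by
  have hterm : ∀ N n, ‖(if n < N then f n else 0) - f n‖ ^ 2 = if n < N then 0 else ‖f n‖ ^ 2 :=
    fun N n => by split_ifs <;> simp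
  have hsum : ∀ N, SqSummable fun n => (if n < N then f n else 0) - f n := fun N =>
    Summable.of_nonneg_of_le (fun _ => by positivity)
      (fun n => by rw [hterm]; split_ifs <;> simp) hf
  refine ⟨hsum, (tendsto_sum_nat_add fun n => ‖f n‖ ^ 2).congr fun N => ?_⟩
  rw [← (hsum N).sum_add_tsum_nat_add N, Finset.sum_eq_zero fun n hn => by
    rw [hterm, if_pos (Finset.mem_range.1 hn)], zero_add]
  exact tsum_congr fun n => by rw [hterm, if_neg (by omega)]

end L2Tendsto

section NormedRing

variable {R : Type*} [NormedRing R] {u : ℕ → ℕ → R} {f : ℕ → R}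

lemma L2Tendsto.const_mul (hu : L2Tendsto u f) (a : R) :
    L2Tendsto (fun k n => a * u k n) fun n => a * f n := by
  have hle : ∀ k n, ‖a * u k n - a * f n‖ ^ 2 ≤ ‖a‖ ^ 2 * ‖u k n - f n‖ ^ 2 := fun k n => by
    rw [← mul_sub, ← mul_pow]
    exact pow_le_pow_left₀ (norm_nonneg _) (norm_mul_le _ _) 2
  refine l2Tendsto_of_tsum_le (fun k => ((hu.1 k).const_mul a).congr fun _ => mul_sub _ _ _)
    (fun k => ?_) (by simpa using hu.2.const_mul (‖a‖ ^ 2))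
  rw [← tsum_mul_left]
  exact Summable.tsum_le_tsum (hle k) (((hu.1 k).const_mul a).congr fun _ => mul_sub _ _ _)
    ((hu.1 k).mul_left _)

lemma l2Tendsto_mul_of_tendsto {x : ℕ → R} {y : R} (hx : Tendsto x atTop (𝓝 y))
    (hf : SqSummable f) : L2Tendsto (fun k n => x k * f n) fun n => y * f n := by
  have hle : ∀ k n, ‖x k * f n - y * f n‖ ^ 2 ≤ ‖x k - y‖ ^ 2 * ‖f n‖ ^ 2 := fun k n => by
    rw [← sub_mul, ← mul_pow]
    exact pow_le_pow_left₀ (norm_nonneg _) (norm_mul_le _ _) 2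
  have hsum : ∀ k, SqSummable fun n => x k * f n - y * f n := fun k =>
    (hf.const_mul (x k - y)).congr fun _ => sub_mul _ _ _
  refine l2Tendsto_of_tsum_le hsum (fun k => ?_)
    (by simpa using ((tendsto_iff_norm_sub_tendsto_zero.1 hx).pow 2).mul_const (∑' n, ‖f n‖ ^ 2))
  rw [← tsum_mul_left]
  exact Summable.tsum_le_tsum (hle k) (hsum k) (hf.mul_left _)

end NormedRing

section TailSum

variable {M : Type*} [AddCommGroup M] [TopologicalSpace M]

def tailSum (f : ℕ → M) (m : ℕ) : M := ∑' n, f (m + n)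

variable [IsTopologicalAddGroup M] [T2Space M] {f : ℕ → M}

lemma tailSum_eq_add (hf : Summable f) (m : ℕ) : tailSum f m = f m + tailSum f (m + 1) := by
  have hm : Summable fun n => f (m + n) := by
    simpa only [add_comm] using (summable_nat_add_iff m).2 hf
  rw [tailSum, hm.tsum_eq_zero_add, add_zero, tailSum]
  simp only [add_right_comm m, add_assoc]

end TailSum

lemma jacobiGraph_iff {a b : ℕ → ℝ} {f g : ℕ → ℂ} :
    jacobiGraph a b f g ↔ ∃ u : ℕ → ℕ → ℂ, (∀ k, (support (u k)).Finite) ∧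
      L2Tendsto u f ∧ L2Tendsto (fun k => jacobiMul a b (u k)) g := by
  simp only [jacobiGraph, L2Tendsto, SqSummable, and_assoc]

lemma eventually_jacobiMul_eq_zero {a b : ℕ → ℝ} {w : ℕ → ℂ} (hw : ∀ᶠ n in atTop, w n = 0) :
    ∀ᶠ n in atTop, jacobiMul a b w n = 0 := by
  obtain ⟨N, hN⟩ := eventually_atTop.1 hw
  refine eventually_atTop.2 ⟨N + 1, fun n hn => ?_⟩
  obtain ⟨m, rfl⟩ : ∃ m, n = m + 1 := ⟨n - 1, by omega⟩
  simp only [jacobiMul, hN m (by omega), hN (m + 1) (by omega), hN (m + 2) (by omega), mul_zero,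
    add_zero]

lemma jacobiMul_zero (a b : ℕ → ℝ) : jacobiMul a b 0 = 0 := by
  funext n
  cases n <;> simp [jacobiMul]

lemma tailSum_jacobiMul_sub_mul {a b : ℕ → ℝ} {z : ℂ} {r w : ℕ → ℂ}
    (hr : ∀ n, z * r (n + 1) = a (n + 1) * r (n + 2) + b (n + 1) * r (n + 1) + a n * r n)
    (hw : ∀ᶠ n in atTop, w n = 0) (j : ℕ) :
    tailSum (fun n => (jacobiMul a b w n - z * w n) * r n) (j + 1) =
      a j * (w j * r (j + 1) - w (j + 1) * r j) := by
  set G : ℕ → ℂ := fun i => a i * (w i * r (i + 1) - w (i + 1) * r i)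
  have hterm : ∀ n, (jacobiMul a b w (j + 1 + n) - z * w (j + 1 + n)) * r (j + 1 + n) =
      G (j + n) - G (j + n + 1) := fun n => by
    rw [show j + 1 + n = j + n + 1 by omega]
    simp only [G, jacobiMul]
    linear_combination (-w (j + n + 1)) * hr (j + n)
  obtain ⟨N, hN⟩ := eventually_atTop.1 hw
  have hG : ∀ i, N ≤ i → G i = 0 := fun i hi => by simp [G, hN i hi, hN (i + 1) (by omega)]
  rw [tailSum, tsum_congr hterm, tsum_eq_sum (s := Finset.range N) fun n hn => by
    rw [Finset.mem_range, not_lt] at hn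
    rw [hG _ (by omega), hG _ (by omega), sub_zero]]
  have htel := Finset.sum_range_sub' (fun n => G (j + n)) N
  simp only [← add_assoc, add_zero] at htel
  rw [htel, hG (j + N) (by omega), sub_zero]

lemma sqSummable_e0 : SqSummable e0 :=
  sqSummable_of_finite_support <| (Set.finite_singleton 0).subset fun n hn => by
    by_contra h
    exact hn (if_neg h)

namespace JacobiSetup

variable (S : JacobiSetup) (z : ℂ) {c d : ℕ → ℂ} {u : ℕ → ℕ → ℂ}

def pqNormSq (n : ℕ) : ℝ := ‖S.p n z‖ ^ 2 + ‖S.q n z‖ ^ 2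

lemma pqNormSq_nonneg (n : ℕ) : 0 ≤ S.pqNormSq z n := by
  unfold pqNormSq
  positivity

lemma sqSummable_p : SqSummable (S.p · z) :=
  (S.indet z).of_nonneg_of_le (fun _ => by positivity) fun _ =>
    le_add_of_nonneg_right (by positivity)

lemma sqSummable_q : SqSummable (S.q · z) :=
  (S.indet z).of_nonneg_of_le (fun _ => by positivity) fun _ =>
    le_add_of_nonneg_left (by positivity)

lemma wronskian_s16 (n : ℕ) : (S.a n : ℂ) * coeffA S z (n + 1) n = 1 := by
  induction n with
  | zero =>
    have ha : (S.a 0 : ℂ) ≠ 0 := Complex.ofReal_ne_zero.2 (S.ha 0).ne'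
    rw [coeffA, S.hp0, S.hq0, S.hp1, S.hq1]
    field_simp
    ring
  | succ n ih =>
    unfold coeffA at ih ⊢
    linear_combination S.q (n + 1) z * S.hrecp n z - S.p (n + 1) z * S.hrecq n z + ih

lemma norm_coeffA_sq_le (n k : ℕ) :
    ‖coeffA S z n k‖ ^ 2 ≤ S.pqNormSq z n * S.pqNormSq z k := by
  have h := norm_sub_le (S.q n z * S.p k z) (S.p n z * S.q k z)
  rw [norm_mul, norm_mul] at h
  rw [coeffA, pqNormSq, pqNormSq]
  nlinarith [pow_le_pow_left₀ (norm_nonneg _) h 2,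
    sq_nonneg (‖S.q n z‖ * ‖S.q k z‖ - ‖S.p n z‖ * ‖S.p k z‖)]

lemma sqSummable_coeffA (k : ℕ) : SqSummable fun n => coeffA S z n k :=
  Summable.of_nonneg_of_le (fun _ => by positivity) (fun n => S.norm_coeffA_sq_le z n k)
    ((S.indet z).mul_right _)

lemma summable_mul_coeffA (hc : SqSummable c) (m k : ℕ) :
    Summable fun n => c (m + n) * coeffA S z (m + n) k :=
  ((summable_norm_mul_of_sqSummable hc (S.sqSummable_coeffA z k)).of_norm).comp_injective
    (add_right_injective m)

lemma norm_xiSeq_sq_le (hc : SqSummable c) (k : ℕ) :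
    ‖xiSeq S c z k‖ ^ 2 ≤ (∑' n, ‖c n‖ ^ 2) * (∑' n, S.pqNormSq z n) * S.pqNormSq z k := by
  have hA : SqSummable fun n => coeffA S z (k + 1 + n) k :=
    (S.sqSummable_coeffA z k).comp_injective (add_right_injective _)
  have hpq : Summable fun n => S.pqNormSq z (k + 1 + n) :=
    (S.indet z).comp_injective (add_right_injective _)
  have hrow : ∑' n, ‖coeffA S z (k + 1 + n) k‖ ^ 2 ≤ (∑' n, S.pqNormSq z n) * S.pqNormSq z k :=
    calc ∑' n, ‖coeffA S z (k + 1 + n) k‖ ^ 2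
        ≤ ∑' n, S.pqNormSq z (k + 1 + n) * S.pqNormSq z k :=
          Summable.tsum_le_tsum (fun n => S.norm_coeffA_sq_le z _ k) hA (hpq.mul_right _)
      _ ≤ (∑' n, S.pqNormSq z n) * S.pqNormSq z k := by
          rw [tsum_mul_right]
          exact mul_le_mul_of_nonneg_right
            (tsum_nat_add_le (S.indet z) (S.pqNormSq_nonneg z) _) (S.pqNormSq_nonneg z k)
  calc ‖xiSeq S c z k‖ ^ 2
      ≤ (∑' n, ‖c (k + 1 + n)‖ ^ 2) * ∑' n, ‖coeffA S z (k + 1 + n) k‖ ^ 2 :=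
        norm_tsum_mul_sq_le (hc.comp_injective (add_right_injective _)) hA
    _ ≤ (∑' n, ‖c n‖ ^ 2) * ((∑' n, S.pqNormSq z n) * S.pqNormSq z k) :=
        mul_le_mul (tsum_nat_add_le hc (fun _ => by positivity) _) hrow
          (tsum_nonneg fun _ => by positivity) (tsum_nonneg fun _ => by positivity)
    _ = _ := by ring

lemma sqSummable_xiSeq (hc : SqSummable c) : SqSummable (xiSeq S c z) :=
  Summable.of_nonneg_of_le (fun _ => by positivity) (S.norm_xiSeq_sq_le z hc)
    ((S.indet z).mul_left _)

lemma tsum_norm_xiSeq_sq_le (hc : SqSummable c) :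
    ∑' k, ‖xiSeq S c z k‖ ^ 2 ≤ (∑' n, ‖c n‖ ^ 2) * (∑' n, S.pqNormSq z n) ^ 2 :=
  calc ∑' k, ‖xiSeq S c z k‖ ^ 2
      ≤ ∑' k, (∑' n, ‖c n‖ ^ 2) * (∑' n, S.pqNormSq z n) * S.pqNormSq z k :=
        Summable.tsum_le_tsum (S.norm_xiSeq_sq_le z hc) (S.sqSummable_xiSeq z hc)
          ((S.indet z).mul_left _)
    _ = _ := by rw [tsum_mul_left]; ring

lemma xiSeq_sub (hc : SqSummable c) (hd : SqSummable d) (k : ℕ) :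
    xiSeq S (fun n => c n - d n) z k = xiSeq S c z k - xiSeq S d z k := by
  simp only [xiSeq, sub_mul]
  exact (S.summable_mul_coeffA z hc _ k).tsum_sub (S.summable_mul_coeffA z hd _ k)

lemma l2Tendsto_xiSeq (hu : L2Tendsto u c) (hc : SqSummable c) :
    L2Tendsto (fun k => xiSeq S (u k) z) (xiSeq S c z) := by
  have hsub : ∀ k n, xiSeq S (u k) z n - xiSeq S c z n = xiSeq S (fun m => u k m - c m) z n :=
    fun k n => (S.xiSeq_sub z (hu.sqSummable_apply hc k) hc n).symm
  refine l2Tendsto_of_tsum_le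
    (fun k => (S.sqSummable_xiSeq z (hu.1 k)).congr fun n => (hsub k n).symm)
    (fun k => ?_) (by simpa using hu.2.mul_const ((∑' n, S.pqNormSq z n) ^ 2))
  simp only [hsub]
  exact S.tsum_norm_xiSeq_sq_le z (hu.1 k)

lemma summable_mul_p (hc : SqSummable c) : Summable fun n => c n * S.p n z :=
  (summable_norm_mul_of_sqSummable hc (S.sqSummable_p z)).of_norm

lemma summable_mul_q (hc : SqSummable c) : Summable fun n => c n * S.q n z :=
  (summable_norm_mul_of_sqSummable hc (S.sqSummable_q z)).of_norm

lemma tendsto_Ffun (hu : L2Tendsto u c) (hc : SqSummable c) :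
    Tendsto (fun k => Ffun S (u k) z) atTop (𝓝 (Ffun S c z)) := by
  have hsub : ∀ k, Ffun S (u k) z - Ffun S c z = ∑' n, (u k n - c n) * S.p n z := fun k => by
    simp only [Ffun, sub_mul]
    exact ((S.summable_mul_p z (hu.sqSummable_apply hc k)).tsum_sub (S.summable_mul_p z hc)).symm
  have hsq : Tendsto (fun k => ‖Ffun S (u k) z - Ffun S c z‖ ^ 2) atTop (𝓝 0) :=
    squeeze_zero (fun _ => by positivity)
      (fun k => (hsub k).symm ▸ norm_tsum_mul_sq_le (hu.1 k) (S.sqSummable_p z))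
      (by simpa using hu.2.mul_const (∑' n, ‖S.p n z‖ ^ 2))
  rw [tendsto_iff_norm_sub_tendsto_zero]
  simpa [Real.sqrt_sq (norm_nonneg _)] using hsq.sqrt

lemma xiSeq_eq_tailSum (hc : SqSummable c) (k : ℕ) :
    xiSeq S c z k = S.p k z * tailSum (fun n => c n * S.q n z) (k + 1)
      - S.q k z * tailSum (fun n => c n * S.p n z) (k + 1) := by
  have hp : Summable fun n => c (k + 1 + n) * S.p (k + 1 + n) z :=
    (S.summable_mul_p z hc).comp_injective (add_right_injective _)
  have hq : Summable fun n => c (k + 1 + n) * S.q (k + 1 + n) z :=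
    (S.summable_mul_q z hc).comp_injective (add_right_injective _)
  rw [tailSum, tailSum, ← tsum_mul_left, ← tsum_mul_left,
    ← (hq.mul_left _).tsum_sub (hp.mul_left _)]
  exact tsum_congr fun n => by rw [coeffA]; ring

lemma jacobiMul_xiSeq (hc : SqSummable c) :
    jacobiMul S.a S.b (xiSeq S c z) = fun k => z * xiSeq S c z k + c k - Ffun S c z * e0 k := by
  have hP := tailSum_eq_add (S.summable_mul_p z hc)
  have hQ := tailSum_eq_add (S.summable_mul_q z hc)
  have hξ := S.xiSeq_eq_tailSum z hc
  set P := tailSum fun n => c n * S.p n z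
  set Q := tailSum fun n => c n * S.q n z
  funext k
  cases k with
  | zero =>
    have hF : Ffun S c z = P 0 := by simp [Ffun, P, tailSum]
    have hq1 : (S.a 0 : ℂ) * S.q 1 z = 1 := by
      rw [S.hq1]; field_simp [Complex.ofReal_ne_zero.2 (S.ha 0).ne']
    have hp1 : S.p 1 z = (z - S.b 0) * S.q 1 z := by rw [S.hp1, S.hq1]; ring
    simp only [jacobiMul, e0, if_pos, mul_one, hF, hξ, S.hp0, S.hq0]
    linear_combination (S.b 0 - z) * hQ 1 + hP 0 + hP 1 + c 0 * S.hp0 z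
      + (c 1 + S.a 0 * Q (1 + 1)) * hp1 + ((z - S.b 0) * Q (1 + 1) - P (1 + 1)) * hq1
  | succ k =>
    have hW := S.wronskian_s16 z k
    simp only [jacobiMul, e0, if_neg (Nat.succ_ne_zero k), mul_zero, sub_zero, hξ]
    rw [coeffA] at hW
    linear_combination (-Q (k + 2)) * S.hrecp k z + P (k + 2) * S.hrecq k z
      + c (k + 1) * hW + S.p k z * S.a k * hQ (k + 1)
      - S.q k z * S.a k * hP (k + 1) - S.p (k + 2) z * S.a (k + 1) * hQ (k + 2)
      + S.q (k + 2) z * S.a (k + 1) * hP (k + 2)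

lemma xiSeq_jacobiMul_sub {w : ℕ → ℂ} (hw : (support w).Finite) :
    xiSeq S (fun n => jacobiMul S.a S.b w n - z * w n) z = w := by
  rw [finite_support_iff_eventually_eq_zero] at hw
  have hd : SqSummable fun n => jacobiMul S.a S.b w n - z * w n :=
    sqSummable_of_finite_support <| finite_support_iff_eventually_eq_zero.2 <|
      (eventually_jacobiMul_eq_zero hw).mp <| hw.mono fun n hwn hJn => by
        rw [hJn, hwn, mul_zero, sub_zero]
  funext k
  have hW := S.wronskian_s16 z k
  rw [coeffA] at hW
  rw [S.xiSeq_eq_tailSum z hd, tailSum_jacobiMul_sub_mul (fun n => S.hrecq n z) hw,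
    tailSum_jacobiMul_sub_mul (fun n => S.hrecp n z) hw]
  linear_combination w k * hW

lemma xiSeq_truncate_eq_zero {N k : ℕ} (hk : N ≤ k) :
    xiSeq S (fun n => if n < N then c n else 0) z k = 0 :=
  (tsum_congr fun n => by simp only [if_neg (show ¬k + 1 + n < N by omega), zero_mul]).trans
    tsum_zero

lemma jacobiGraph_xiSeq (hc : SqSummable c) :
    jacobiGraph S.a S.b (xiSeq S c z) fun k => z * xiSeq S c z k + c k - Ffun S c z * e0 k := by
  set u : ℕ → ℕ → ℂ := fun N n => if n < N then c n else 0
  have hu : L2Tendsto u c := l2Tendsto_truncate hc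
  have hJ : (fun N => jacobiMul S.a S.b (xiSeq S (u N) z)) =
      fun N k => z * xiSeq S (u N) z k + u N k - Ffun S (u N) z * e0 k :=
    funext fun N => S.jacobiMul_xiSeq z (hu.sqSummable_apply hc N)
  refine jacobiGraph_iff.2 ⟨fun N => xiSeq S (u N) z, fun N => ?_, S.l2Tendsto_xiSeq z hu hc, ?_⟩
  · exact finite_support_iff_eventually_eq_zero.2 <|
      eventually_atTop.2 ⟨N, fun k hk => S.xiSeq_truncate_eq_zero z hk⟩
  · rw [hJ]
    exact (((S.l2Tendsto_xiSeq z hu hc).const_mul z).add hu).sub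
      (l2Tendsto_mul_of_tendsto (S.tendsto_Ffun z hu hc) sqSummable_e0)

lemma sqSummable_of_jacobiGraph {f g : ℕ → ℂ} (h : jacobiGraph S.a S.b f g) :
    SqSummable f ∧ SqSummable g := by
  obtain ⟨u, hfin, hu, hJu⟩ := jacobiGraph_iff.1 h
  exact ⟨hu.sqSummable (sqSummable_of_finite_support (hfin 0)),
    hJu.sqSummable (sqSummable_of_finite_support <| finite_support_iff_eventually_eq_zero.2 <|
      eventually_jacobiMul_eq_zero (finite_support_iff_eventually_eq_zero.1 (hfin 0)))⟩

lemma xiSeq_eq_of_jacobiGraph {f g : ℕ → ℂ} (h : jacobiGraph S.a S.b f g) :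
    xiSeq S (fun n => g n - z * f n) z = f := by
  obtain ⟨hf, hg⟩ := S.sqSummable_of_jacobiGraph h
  obtain ⟨u, hfin, hu, hJu⟩ := jacobiGraph_iff.1 h
  have hξ := S.l2Tendsto_xiSeq z (hJu.sub (hu.const_mul z)) (hg.sub (hf.const_mul z))
  simp only [S.xiSeq_jacobiMul_sub z (hfin _)] at hξ
  exact (hu.unique hξ).symm

lemma xiSeq_eq_zero_iff (hc : SqSummable c) :
    xiSeq S c z = 0 ↔ ∃ γ : ℂ, c = fun n => γ * e0 n := by
  constructor
  · intro h0
    refine ⟨Ffun S c z, funext fun n => ?_⟩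
    have h := congr_fun (S.jacobiMul_xiSeq z hc) n
    simp only [h0, jacobiMul_zero, Pi.zero_apply, mul_zero, zero_add] at h
    linear_combination -h
  · rintro ⟨γ, rfl⟩
    funext k
    exact (tsum_congr fun n => by simp [e0]).trans tsum_zero

end JacobiSetup

/-- The operator `Ξ_{z₀} : c ↦ ξ(c,z₀)` satisfies: (a) `Ξ_{z₀}(c) ∈ D(T)` with
`(T − z₀)Ξ_{z₀}(c) + F_c(z₀)e₀ = c`; (b) its range is `D(T)`; (c) its kernel is `ℂe₀`;
(d) `Ξ_{z₀}((T − z₀)v) = v` for `v ∈ D(T)`, i.e. its restriction to `(T − z₀)(D(T))` is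
`(T − z₀)⁻¹`. -/
theorem stmt16 (S : JacobiSetup) (z₀ : ℂ) :
    (∀ c : ℕ → ℂ, Summable (fun n => ‖c n‖ ^ 2) →
      ∃ g : ℕ → ℂ, jacobiGraph S.a S.b (xiSeq S c z₀) g ∧
        ∀ n, g n - z₀ * xiSeq S c z₀ n + Ffun S c z₀ * e0 n = c n) ∧
    (∀ f : ℕ → ℂ, inDomT S.a S.b f ↔
      ∃ c : ℕ → ℂ, Summable (fun n => ‖c n‖ ^ 2) ∧ xiSeq S c z₀ = f) ∧
    (∀ c : ℕ → ℂ, Summable (fun n => ‖c n‖ ^ 2) →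
      (xiSeq S c z₀ = 0 ↔ ∃ γ : ℂ, c = fun n => γ * e0 n)) ∧
    (∀ f g : ℕ → ℂ, jacobiGraph S.a S.b f g →
      xiSeq S (fun n => g n - z₀ * f n) z₀ = f) := by
  refine ⟨fun c hc => ⟨_, S.jacobiGraph_xiSeq z₀ hc, fun n => by ring⟩, fun f => ⟨?_, ?_⟩,
    fun c hc => S.xiSeq_eq_zero_iff z₀ hc, fun f g h => S.xiSeq_eq_of_jacobiGraph z₀ h⟩
  · rintro ⟨g, hg⟩
    obtain ⟨hf, hg'⟩ := S.sqSummable_of_jacobiGraph hg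
    exact ⟨_, hg'.sub (hf.const_mul z₀), S.xiSeq_eq_of_jacobiGraph z₀ hg⟩
  · rintro ⟨c, hc, rfl⟩
    exact ⟨_, S.jacobiGraph_xiSeq z₀ hc⟩
end
end
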